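/- Let G ⊆ ℝ^d be a compact nonempty set such that a closed ball of radius λ > 0 rolls freely in G and a closed ball of radius r > 0 rolls freely in cl(Gᶜ). Then G is r-convex, i.e., G = C_r(G). -/

import Mathlib

/-- A ball of radius `ρ` rolls freely in `A`. -/
def RollsFreely {d : ℕ} (ρ : ℝ) (A : Set (EuclideanSpace ℝ (Fin d))) : Prop :=
  ∀ a ∈ frontier A, ∃ x, a ∈ Metric.closedBall x ρ ∧ Metric.closedBall x ρ ⊆ A

/-- The `r`-convex hull of `A`. -/
def rHull {d : ℕ} (r : ℝ) (A : Set (EuclideanSpace ℝ (Fin d))) :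
    Set (EuclideanSpace ℝ (Fin d)) :=
  ⋂ x ∈ {x : EuclideanSpace ℝ (Fin d) | Metric.ball x r ∩ A = ∅}, (Metric.ball x r)ᶜ

/-!
Let `z ∉ G` and let `a ∈ G` be a point of `G` nearest to `z`, at distance `ρ > 0`. If `ρ ≥ r`,
the ball `B_r(z)` misses `G`. Otherwise `a` lies on the frontier of `G`, where it is touched by
an inner ball `B_λ[x₁] ⊆ G` and an outer ball `B_r[x₂] ⊆ cl(Gᶜ)`; the inner ball makes `G`
regular closed, so the open ball `B_r(x₂)` misses `G`. The open balls `B_ρ(z)` and `B_r(x₂)`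
are both tangent to `B_λ(x₁)` at `a` from outside, so `z` and `x₂` lie on the ray from `x₁`
through `a`, and `dist z x₂ = r - ρ < r`: again `z` lies in an `r`-ball missing `G`.
-/

open Metric Set

section Geometry

variable {E : Type*} [NormedAddCommGroup E] [NormedSpace ℝ E]

theorem dist_add_dist_eq_of_disjoint_ball {x y a : E} {δ ε : ℝ} (hδ : 0 < δ) (hε : 0 < ε)
    (h : Disjoint (ball x δ) (ball y ε)) (hx : a ∈ closedBall x δ) (hy : a ∈ closedBall y ε) :
    dist x a = δ ∧ dist a y = ε ∧ dist x a + dist a y = dist x y := by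
  have hxy := (disjoint_ball_ball_iff hδ hε).1 h
  rw [mem_closedBall'] at hx
  rw [mem_closedBall] at hy
  have := dist_triangle x a y
  refine ⟨?_, ?_, ?_⟩ <;> linarith

theorem dist_eq_abs_sub_of_dist_add_dist_eq [StrictConvexSpace ℝ E] {x a y z : E} (hxa : x ≠ a)
    (hy : dist x a + dist a y = dist x y) (hz : dist x a + dist a z = dist x z) :
    dist y z = |dist a y - dist a z| := by
  have hya := (dist_add_dist_eq_iff.1 hy).sameRay_vsub
  have hza := (dist_add_dist_eq_iff.1 hz).sameRay_vsub
  have hsame : SameRay ℝ (y - a) (z - a) :=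
    hya.symm.trans hza fun h => absurd (sub_eq_zero.1 h).symm hxa
  simpa only [sub_sub_sub_cancel_right, ← dist_eq_norm, dist_comm _ a] using hsame.norm_sub

theorem dist_eq_abs_sub_of_disjoint_ball_of_disjoint_ball [StrictConvexSpace ℝ E] {x y z a : E}
    {δ ε η : ℝ} (hδ : 0 < δ) (hε : 0 < ε) (hη : 0 < η) (hy : Disjoint (ball x δ) (ball y ε))
    (hz : Disjoint (ball x δ) (ball z η)) (hax : a ∈ closedBall x δ) (hay : a ∈ closedBall y ε)
    (haz : a ∈ closedBall z η) : dist y z = |ε - η| := by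
  obtain ⟨hxa, hay, hxy⟩ := dist_add_dist_eq_of_disjoint_ball hδ hε hy hax hay
  obtain ⟨-, haz, hxz⟩ := dist_add_dist_eq_of_disjoint_ball hδ hη hz hax haz
  rw [dist_eq_abs_sub_of_dist_add_dist_eq (dist_pos.1 (hxa ▸ hδ)) hxy hxz, hay, haz]

end Geometry

section Rolling

variable {d : ℕ} {l : ℝ} {A : Set (EuclideanSpace ℝ (Fin d))}

theorem RollsFreely.frontier_subset_closure_interior (hl : 0 < l) (h : RollsFreely l A) :
    frontier A ⊆ closure (interior A) := by
  intro a ha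
  obtain ⟨x, hax, hxA⟩ := h a ha
  have hball : ball x l ⊆ interior A :=
    interior_maximal (ball_subset_closedBall.trans hxA) isOpen_ball
  exact closure_mono hball (closure_ball x hl.ne' ▸ hax)

theorem RollsFreely.closure_interior_eq (hA : IsClosed A) (hl : 0 < l) (h : RollsFreely l A) :
    closure (interior A) = A := by
  refine (hA.closure_subset_iff.2 interior_subset).antisymm ?_
  calc A = interior A ∪ frontier A := by rw [← closure_eq_interior_union_frontier, hA.closure_eq]
    _ ⊆ closure (interior A) := union_subset subset_closure (h.frontier_subset_closure_interior hl)

theorem RollsFreely.interior_closure_compl (hA : IsClosed A) (hl : 0 < l) (h : RollsFreely l A) :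
    interior (closure Aᶜ) = Aᶜ := by
  rw [closure_compl, interior_compl, h.closure_interior_eq hA hl]

theorem RollsFreely.frontier_closure_compl (hA : IsClosed A) (hl : 0 < l) (h : RollsFreely l A) :
    frontier (closure Aᶜ) = frontier A := by
  rw [isClosed_closure.frontier_eq, h.interior_closure_compl hA hl, ← frontier_compl,
    hA.isOpen_compl.frontier_eq]

end Rolling

theorem mem_rHull_iff {d : ℕ} {r : ℝ} {A : Set (EuclideanSpace ℝ (Fin d))}
    {z : EuclideanSpace ℝ (Fin d)} : z ∈ rHull r A ↔ ∀ c, Disjoint (ball c r) A → z ∉ ball c r := by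
  simp only [rHull, mem_iInter, mem_ofPred_eq, mem_compl_iff, disjoint_iff_inter_eq_empty]

theorem subset_rHull {d : ℕ} (r : ℝ) (A : Set (EuclideanSpace ℝ (Fin d))) : A ⊆ rHull r A :=
  fun _ hz => mem_rHull_iff.2 fun _ hc hzc => hc.notMem_of_mem_left hzc hz

/-- If `G` is compact and nonempty, a ball of radius `λ` rolls freely in `G`
and a ball of radius `r` rolls freely in `cl(Gᶜ)`, then `G` is `r`-convex. -/
theorem rconvex_of_rolling {d : ℕ} {G : Set (EuclideanSpace ℝ (Fin d))}
    (hcomp : IsCompact G) (hne : G.Nonempty) {l r : ℝ} (hl : 0 < l) (hr : 0 < r)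
    (hroll₁ : RollsFreely l G) (hroll₂ : RollsFreely r (closure Gᶜ)) :
    G = rHull r G := by
  have hG := hcomp.isClosed
  refine (subset_rHull r G).antisymm fun z hz => ?_
  by_contra hzG
  rw [mem_rHull_iff] at hz
  obtain ⟨a, haG, hza⟩ := hcomp.exists_infDist_eq_dist hne z
  have hρ : 0 < dist z a := hza ▸ (hG.notMem_iff_infDist_pos hne).1 hzG
  have hzG' : ball z (dist z a) ⊆ Gᶜ := hza ▸ ball_infDist_subset_compl
  rcases le_or_gt r (dist z a) with hρr | hρr
  · exact hz z (subset_compl_iff_disjoint_right.1 ((ball_subset_ball hρr).trans hzG'))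
      (mem_ball_self hr)
  have haF : a ∈ frontier G := by
    rw [frontier_eq_closure_inter_closure]
    refine ⟨subset_closure haG, closure_mono hzG' ?_⟩
    rw [closure_ball z hρ.ne']
    exact mem_closedBall'.2 le_rfl
  obtain ⟨x₁, ha₁, hx₁G⟩ := hroll₁ a haF
  obtain ⟨x₂, ha₂, hx₂G⟩ := hroll₂ a (hroll₁.frontier_closure_compl hG hl ▸ haF)
  have hx₁ : ball x₁ l ⊆ G := ball_subset_closedBall.trans hx₁G
  have hx₂ : ball x₂ r ⊆ Gᶜ := hroll₁.interior_closure_compl hG hl ▸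
    interior_maximal (ball_subset_closedBall.trans hx₂G) isOpen_ball
  have hzx₂ : dist z x₂ = |dist z a - r| :=
    dist_eq_abs_sub_of_disjoint_ball_of_disjoint_ball hl hρ hr
      (subset_compl_iff_disjoint_right.1 (hx₁.trans (subset_compl_comm.1 hzG')))
      (subset_compl_iff_disjoint_right.1 (hx₁.trans (subset_compl_comm.1 hx₂)))
      ha₁ (mem_closedBall'.2 le_rfl) ha₂
  refine hz x₂ (subset_compl_iff_disjoint_right.1 hx₂) (mem_ball.2 ?_)
  rw [hzx₂, abs_of_neg (sub_neg.2 hρr)]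
  linarith
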